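/- Cut is not admissible in the Core logic sequent calculus: there exist formulas such that ¬A ⊢ A → B and A → B, A ⊢ B are derivable but ¬A, A ⊢ B is not derivable (for distinct atoms A, B). -/
import Mathlib


inductive Form : Type where
  | var : Nat → Form
  | neg : Form → Form
  | conj : Form → Form → Form
  | disj : Form → Form → Form
  | imp : Form → Form → Form
deriving DecidableEq

open Form

/-- Sequent calculus for propositional Core logic (Tennant).
Contexts are finite sets of formulas; the conclusion is `some C` or `none`
(the empty / absurdity conclusion ⊥). -/
inductive Core : Finset Form → Option Form → Prop where
  | ax (A : Form) : Core {A} (some A)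
  | lneg {Δ : Finset Form} {A : Form} :
      Core Δ (some A) → Core (insert (Form.neg A) Δ) none
  | rneg {Δ : Finset Form} {A : Form} :
      Core (insert A Δ) none → Core Δ (some (Form.neg A))
  | landL {Δ : Finset Form} {x : Option Form} (A B : Form) :
      Core Δ x → (Δ ∩ {A, B}).Nonempty →
      Core (insert (Form.conj A B) (Δ \ {A, B})) x
  | randR {Δ Γ : Finset Form} {A B : Form} :
      Core Δ (some A) → Core Γ (some B) → Core (Δ ∪ Γ) (some (Form.conj A B))
  | lor {Δ Γ : Finset Form} {A B : Form} {x y z : Option Form} :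
      Core (insert A Δ) x → Core (insert B Γ) y →
      ((x = z ∧ (y = z ∨ y = none)) ∨ (y = z ∧ x = none)) →
      Core (insert (Form.disj A B) (Δ ∪ Γ)) z
  | ror1 {Δ : Finset Form} {A : Form} (B : Form) :
      Core Δ (some A) → Core Δ (some (Form.disj A B))
  | ror2 {Δ : Finset Form} {B : Form} (A : Form) :
      Core Δ (some B) → Core Δ (some (Form.disj A B))
  | limp {Δ Γ : Finset Form} {A B : Form} {x : Option Form} :
      Core Δ (some A) → Core (insert B Γ) x →
      Core (insert (Form.imp A B) (Δ ∪ Γ)) x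
  | rimpa {Δ : Finset Form} {A : Form} (B : Form) :
      Core (insert A Δ) none → Core Δ (some (Form.imp A B))
  | rimpb {Δ : Finset Form} {B : Form} (A : Form) :
      Core Δ (some B) → Core (Δ \ {A}) (some (Form.imp A B))

/-- cut is not admissible in Core logic. -/
theorem core_cut_inadmissible :
    ∃ p q : Nat, p ≠ q ∧
      Core ({Form.neg (Form.var p)} : Finset Form)
        (some (Form.imp (Form.var p) (Form.var q))) ∧
      Core ({Form.imp (Form.var p) (Form.var q), Form.var p} : Finset Form)
        (some (Form.var q)) ∧
      ¬ Core ({Form.neg (Form.var p), Form.var p} : Finset Form)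
          (some (Form.var q)) := by
  refine ⟨0, 1, by decide, ?_, ?_, ?_⟩
  · -- ¬p ⊢ p → q
    apply Core.rimpa
    have h : Core (insert (Form.neg (Form.var 0)) {Form.var 0}) none :=
      Core.lneg (Core.ax (Form.var 0))
    have hs : (insert (Form.var 0) ({Form.neg (Form.var 0)} : Finset Form)) =
        insert (Form.neg (Form.var 0)) {Form.var 0} := by
      ext x; simp [or_comm]
    rw [hs]; exact h
  · -- p → q, p ⊢ q
    have h : Core (insert (Form.imp (Form.var 0) (Form.var 1))
        (({Form.var 0} : Finset Form) ∪ ∅)) (some (Form.var 1)) := by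
      apply Core.limp (Core.ax (Form.var 0))
      have : (insert (Form.var 1) (∅ : Finset Form)) = {Form.var 1} := by simp
      rw [this]; exact Core.ax (Form.var 1)
    simpa using h
  · intro h
    generalize hS : ({Form.neg (Form.var 0), Form.var 0} : Finset Form) = S at h
    cases h with
    | ax A =>
      have h0 : Form.neg (Form.var 0) ∈ ({Form.var 1} : Finset Form) := by
        rw [← hS]; simp
      simp at h0
    | landL A B hd hne =>
      have : Form.conj A B ∈ ({Form.neg (Form.var 0), Form.var 0} : Finset Form) := by
        rw [hS]; exact Finset.mem_insert_self _ _
      simp at this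
    | lor hx hy hc =>
      rename_i Δ Γ A B x y
      have : Form.disj A B ∈ ({Form.neg (Form.var 0), Form.var 0} : Finset Form) := by
        rw [hS]; exact Finset.mem_insert_self _ _
      simp at this
    | limp hA hB =>
      rename_i A B
      have : Form.imp A B ∈ ({Form.neg (Form.var 0), Form.var 0} : Finset Form) := by
        rw [hS]; exact Finset.mem_insert_self _ _
      simp at this
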